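/- arXiv:2105.07380 — 4 statements merged into one kernel-verified Lean document; each statement's English description precedes it below -/
import Mathlib

section
/- Suppose that for some i ∈ I the adjoint L_i* : G_i → H is surjective and there exists a continuous convex function g_i : G_i → ℝ such that F_i is the proximity operator of g_i, i.e., for every y ∈ G_i, F_i y is the unique minimizer over G_i of the function z ↦ g_i(z) + ‖y − z‖²/2. Then the relaxed problem has a solution: there exists x ∈ C such that Σ_{j∈I} ω_j ⟪L_j(y − x), F_j(L_j x) − p_j⟫ ≥ 0 for every y ∈ C. -/
/-!
The relaxed problem is the variational inequality for the monotone Lipschitz operator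
`B x = ∑ j, ω j • L j† (F j (L j x) - p j)` on `C`. For `ε > 0` the operator `B + ε • id` is
strongly monotone, so its inequality is solved by a fixed point of the contracting projected
gradient step. If `B` is coercive these Tikhonov solutions stay bounded as `ε ↓ 0`, and monotonicity
gives `‖x_ε' - x_ε‖² ≤ ‖x_ε'‖² - ‖x_ε‖²` for `ε' < ε`; the norms increase to a limit, so the
solutions converge, and the limit solves the inequality for `B`.

Coercivity comes from the `i`-th term. The proximity operator `F i` of `g` is a subgradient of the
conjugate of `g + ‖·‖² / 2`, which, `g` being locally bounded, exceeds every `⟪q, ·⟫` by at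
least `δ ‖·‖ - c`. Since `L i†` is onto, `L i` is bounded below, and the remaining terms are
absorbed into `q`.
-/

open RealInnerProductSpace Filter Topology
open scoped NNReal

theorem LipschitzWith.finset_sum {α ι E : Type*} [PseudoEMetricSpace α] [SeminormedAddCommGroup E]
    {s : Finset ι} {f : ι → α → E} {K : ι → ℝ≥0} (hf : ∀ i ∈ s, LipschitzWith (K i) (f i)) :
    LipschitzWith (∑ i ∈ s, K i) fun x => ∑ i ∈ s, f i x := by
  classical
  induction s using Finset.induction_on with
  | empty => simpa using LipschitzWith.const (0 : E)
  | insert j s hj ih =>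
    simp only [Finset.sum_insert hj]
    exact (hf j (s.mem_insert_self j)).add (ih fun i hi => hf i (Finset.mem_insert_of_mem hi))

section Hilbert

variable {E : Type*} [NormedAddCommGroup E] [InnerProductSpace ℝ E]

def FirmlyNonexpansive (F : E → E) : Prop :=
  ∀ u v, ⟪u - v, F u - F v⟫ ≥ ‖F u - F v‖ ^ 2

theorem FirmlyNonexpansive.inner_nonneg {F : E → E} (hF : FirmlyNonexpansive F) (u v : E) :
    0 ≤ ⟪u - v, F u - F v⟫ :=
  (sq_nonneg _).trans (hF u v)

theorem FirmlyNonexpansive.lipschitzWith {F : E → E} (hF : FirmlyNonexpansive F) :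
    LipschitzWith 1 F := by
  refine LipschitzWith.of_dist_le_mul fun u v => ?_
  rw [dist_eq_norm, dist_eq_norm, NNReal.coe_one, one_mul]
  have h := (hF u v).le.trans (real_inner_le_norm _ _)
  nlinarith [norm_nonneg (u - v), norm_nonneg (F u - F v)]

theorem firmlyNonexpansive_of_inner_le_zero {C : Set E} {P : E → E} (hPC : ∀ x, P x ∈ C)
    (hP : ∀ x, ∀ y ∈ C, ⟪x - P x, y - P x⟫ ≤ 0) : FirmlyNonexpansive P := by
  intro x y
  have hx := hP x (P y) (hPC y)
  have hy := hP y (P x) (hPC x)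
  have h : ⟪x - y, P x - P y⟫ - ‖P x - P y‖ ^ 2
      = -⟪x - P x, P y - P x⟫ - ⟪y - P y, P x - P y⟫ := by
    rw [← real_inner_self_eq_norm_sq, ← inner_sub_left, ← inner_neg_right, neg_sub,
      ← inner_sub_left]
    congr 1
    abel
  linarith

theorem exists_proj_inner_sub_le_zero [CompleteSpace E] {C : Set E} (hCne : C.Nonempty)
    (hCcl : IsClosed C) (hCcv : Convex ℝ C) :
    ∃ P : E → E, (∀ x, P x ∈ C) ∧ (∀ x, ∀ y ∈ C, ⟪x - P x, y - P x⟫ ≤ 0) := by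
  have h x : ∃ q ∈ C, ∀ y ∈ C, ⟪x - q, y - q⟫ ≤ 0 := by
    obtain ⟨q, hqC, hq⟩ := exists_norm_eq_iInf_of_complete_convex hCne hCcl.isComplete hCcv x
    exact ⟨q, hqC, (norm_eq_iInf_iff_real_inner_le_zero hCcv hqC).1 hq⟩
  choose P hPC hP using h
  exact ⟨P, hPC, hP⟩

theorem norm_sub_smul_sub_le_of_strongly_monotone {B : E → E} {m ℓ : ℝ} (hm : 0 < m)
    (hmℓ : m ≤ ℓ) (hmono : ∀ x y, m * ‖x - y‖ ^ 2 ≤ ⟪B x - B y, x - y⟫)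
    (hB : ∀ x y, ‖B x - B y‖ ≤ ℓ * ‖x - y‖) (x y : E) :
    ‖(x - y) - (m / ℓ ^ 2) • (B x - B y)‖ ≤ (1 - (m / ℓ) ^ 2 / 2) * ‖x - y‖ := by
  have hℓ : 0 < ℓ := hm.trans_le hmℓ
  have ht : (m / ℓ) ^ 2 ≤ 1 := pow_le_one₀ (by positivity) ((div_le_one hℓ).2 hmℓ)
  set γ := m / ℓ ^ 2
  have hsq : ‖B x - B y‖ ^ 2 ≤ ℓ ^ 2 * ‖x - y‖ ^ 2 := by
    rw [← mul_pow]; exact pow_le_pow_left₀ (norm_nonneg _) (hB x y) 2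
  have expand : ‖(x - y) - γ • (B x - B y)‖ ^ 2
      = ‖x - y‖ ^ 2 - 2 * γ * ⟪B x - B y, x - y⟫ + γ ^ 2 * ‖B x - B y‖ ^ 2 := by
    rw [norm_sub_sq_real, inner_smul_right, norm_smul, mul_pow, Real.norm_eq_abs, sq_abs,
      real_inner_comm]
    ring
  refine le_of_pow_le_pow_left₀ two_ne_zero (by nlinarith [norm_nonneg (x - y)]) ?_
  calc ‖(x - y) - γ • (B x - B y)‖ ^ 2
      ≤ ‖x - y‖ ^ 2 - 2 * γ * (m * ‖x - y‖ ^ 2) + γ ^ 2 * (ℓ ^ 2 * ‖x - y‖ ^ 2) := by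
        rw [expand]
        have hγ0 : 0 ≤ γ := by positivity
        gcongr ?_ - 2 * γ * ?_ + γ ^ 2 * ?_
        · exact hmono x y
    _ = (1 - (m / ℓ) ^ 2) * ‖x - y‖ ^ 2 := by
        simp only [γ]
        field_simp
        ring
    _ ≤ ((1 - (m / ℓ) ^ 2 / 2) * ‖x - y‖) ^ 2 := by
        rw [mul_pow]
        gcongr
        nlinarith [sq_nonneg ((m / ℓ) ^ 2)]

def SolvesVarIneq (C : Set E) (B : E → E) (x : E) : Prop :=
  x ∈ C ∧ ∀ y ∈ C, 0 ≤ ⟪B x, y - x⟫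

theorem exists_solvesVarIneq_of_strongly_monotone [CompleteSpace E] {C : Set E}
    (hCne : C.Nonempty) (hCcl : IsClosed C) (hCcv : Convex ℝ C) {B : E → E} {m : ℝ} {K : ℝ≥0}
    (hm : 0 < m) (hmono : ∀ x y, m * ‖x - y‖ ^ 2 ≤ ⟪B x - B y, x - y⟫) (hB : LipschitzWith K B) :
    ∃ x, SolvesVarIneq C B x := by
  obtain ⟨P, hPC, hP⟩ := exists_proj_inner_sub_le_zero hCne hCcl hCcv
  -- `max` makes `m ≤ ℓ`, so that the contraction factor `r` lies in `[1/2, 1)`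
  set ℓ := max (K : ℝ) m
  set r := 1 - (m / ℓ) ^ 2 / 2 with hr
  have hℓ : 0 < ℓ := hm.trans_le (le_max_right _ _)
  have hr0 : 0 ≤ r := by
    have : (m / ℓ) ^ 2 ≤ 1 := pow_le_one₀ (by positivity) ((div_le_one hℓ).2 (le_max_right _ _))
    linarith [hr]
  have hr1 : r < 1 := by
    have : 0 < (m / ℓ) ^ 2 := by positivity
    linarith [hr]
  set T : E → E := fun x => P (x - (m / ℓ ^ 2) • B x)
  have hT : ContractingWith r.toNNReal T := by
    refine ⟨by simpa using hr1, LipschitzWith.of_dist_le_mul fun x y => ?_⟩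
    rw [dist_eq_norm, dist_eq_norm, Real.coe_toNNReal r hr0]
    calc ‖T x - T y‖ ≤ ‖(x - (m / ℓ ^ 2) • B x) - (y - (m / ℓ ^ 2) • B y)‖ := by
          simpa using (firmlyNonexpansive_of_inner_le_zero hPC hP).lipschitzWith.norm_sub_le _ _
      _ = ‖(x - y) - (m / ℓ ^ 2) • (B x - B y)‖ := by rw [smul_sub]; abel_nf
      _ ≤ r * ‖x - y‖ :=
        norm_sub_smul_sub_le_of_strongly_monotone hm (le_max_right _ _) hmono
          (fun x y => (hB.norm_sub_le x y).trans
            (mul_le_mul_of_nonneg_right (le_max_left _ _) (norm_nonneg _))) x y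
  set x := ContractingWith.fixedPoint T hT
  have hx : T x = x := ContractingWith.fixedPoint_isFixedPt hT
  refine ⟨x, hx ▸ hPC _, fun y hy => ?_⟩
  have h := hP (x - (m / ℓ ^ 2) • B x) y hy
  rw [show P (x - (m / ℓ ^ 2) • B x) = x from hx, sub_sub_cancel_left, inner_neg_left,
    real_inner_smul_left] at h
  have hγ : 0 < m / ℓ ^ 2 := by positivity
  nlinarith

theorem exists_solvesVarIneq_add_smul [CompleteSpace E] {C : Set E} (hCne : C.Nonempty)
    (hCcl : IsClosed C) (hCcv : Convex ℝ C) {B : E → E} {K : ℝ≥0}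
    (hmono : ∀ x y, 0 ≤ ⟪B x - B y, x - y⟫) (hB : LipschitzWith K B) {ε : ℝ} (hε : 0 < ε) :
    ∃ x, SolvesVarIneq C (fun z => B z + ε • z) x := by
  refine exists_solvesVarIneq_of_strongly_monotone hCne hCcl hCcv hε (fun x y => ?_)
    (hB.add (lipschitzWith_smul ε))
  rw [add_sub_add_comm, ← smul_sub, inner_add_left, real_inner_smul_left,
    real_inner_self_eq_norm_sq]
  linarith [hmono x y]

theorem SolvesVarIneq.norm_le_of_coercive {C : Set E} {B : E → E} {ε ρ : ℝ} {x x₀ : E}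
    (hε : 0 < ε) (hx : SolvesVarIneq C (fun z => B z + ε • z) x) (hx₀ : x₀ ∈ C)
    (hcoer : ∀ x ∈ C, ρ ≤ ‖x‖ → 0 ≤ ⟪B x, x - x₀⟫) : ‖x‖ ≤ max ρ ‖x₀‖ := by
  by_contra! h
  rw [max_lt_iff] at h
  have hvi := hx.2 x₀ hx₀
  have hB := hcoer x hx.1 h.1.le
  have hx₀x : ⟪x, x₀⟫ < ‖x‖ ^ 2 :=
    (real_inner_le_norm _ _).trans_lt (by nlinarith [norm_nonneg x₀])
  rw [inner_add_left, real_inner_smul_left, ← neg_sub x x₀, inner_neg_right, inner_neg_right,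
    inner_sub_right x x x₀, real_inner_self_eq_norm_sq] at hvi
  nlinarith

theorem SolvesVarIneq.norm_sub_sq_le {C : Set E} {B : E → E}
    (hmono : ∀ x y, 0 ≤ ⟪B x - B y, x - y⟫) {ε ε' : ℝ} {x x' : E} (hε' : 0 < ε')
    (hεε' : ε' < ε) (hx : SolvesVarIneq C (fun z => B z + ε • z) x)
    (hx' : SolvesVarIneq C (fun z => B z + ε' • z) x') :
    ‖x' - x‖ ^ 2 ≤ ‖x'‖ ^ 2 - ‖x‖ ^ 2 := by
  have hvi := hx.2 x' hx'.1
  have hvi' := hx'.2 x hx.1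
  have hB := hmono x' x
  rw [← neg_sub x' x, inner_neg_right, inner_add_left, real_inner_smul_left] at hvi'
  rw [inner_add_left, real_inner_smul_left] at hvi
  rw [inner_sub_left] at hB
  have hx'd : ⟪x', x' - x⟫ = ⟪x, x' - x⟫ + ‖x' - x‖ ^ 2 := by
    rw [← real_inner_self_eq_norm_sq, ← inner_add_left, add_sub_cancel]
  have hnorm : ‖x'‖ ^ 2 = ‖x‖ ^ 2 + 2 * ⟪x, x' - x⟫ + ‖x' - x‖ ^ 2 := by
    rw [← norm_add_sq_real, add_sub_cancel]
  have ha : 0 ≤ ⟪x, x' - x⟫ := by nlinarith [sq_nonneg ‖x' - x‖]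
  linarith

theorem cauchySeq_of_norm_sub_sq_le {F : Type*} [SeminormedAddCommGroup F] {u : ℕ → F} {R : ℝ}
    (hR : ∀ n, ‖u n‖ ≤ R) (h : ∀ n m, n ≤ m → ‖u m - u n‖ ^ 2 ≤ ‖u m‖ ^ 2 - ‖u n‖ ^ 2) :
    CauchySeq u := by
  have hmono : Monotone fun n => ‖u n‖ ^ 2 := fun n m hnm => by
    linarith [h n m hnm, sq_nonneg ‖u m - u n‖]
  have hbdd : BddAbove (Set.range fun n => ‖u n‖ ^ 2) := by
    refine ⟨R ^ 2, ?_⟩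
    rintro _ ⟨n, rfl⟩
    exact pow_le_pow_left₀ (norm_nonneg _) (hR n) 2
  have hl := tendsto_atTop_ciSup hmono hbdd
  refine cauchySeq_of_le_tendsto_0' (fun n => √((⨆ k, ‖u k‖ ^ 2) - ‖u n‖ ^ 2))
    (fun n m hnm => ?_) ?_
  · rw [dist_comm, dist_eq_norm]
    refine Real.le_sqrt_of_sq_le ((h n m hnm).trans ?_)
    linarith [le_ciSup hbdd m]
  · have := (tendsto_const_nhds (x := ⨆ k, ‖u k‖ ^ 2)).sub hl |>.sqrt
    rwa [sub_self, Real.sqrt_zero] at this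

theorem solvesVarIneq_of_tendsto {C : Set E} (hCcl : IsClosed C) {B : E → E} (hB : Continuous B)
    {ε : ℕ → ℝ} {u : ℕ → E} {x : E} (hε : Tendsto ε atTop (𝓝 0)) (hu : Tendsto u atTop (𝓝 x))
    (hsol : ∀ n, SolvesVarIneq C (fun z => B z + ε n • z) (u n)) : SolvesVarIneq C B x := by
  refine ⟨hCcl.mem_of_tendsto hu (Eventually.of_forall fun n => (hsol n).1), fun y hy => ?_⟩
  have h : Tendsto (fun n => ⟪B (u n) + ε n • u n, y - u n⟫) atTop
      (𝓝 ⟪B x + (0 : ℝ) • x, y - x⟫) :=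
    (((hB.tendsto x).comp hu).add (hε.smul hu)).inner (tendsto_const_nhds.sub hu)
  rw [zero_smul, add_zero] at h
  exact ge_of_tendsto' h fun n => (hsol n).2 y hy

theorem exists_solvesVarIneq_of_coercive [CompleteSpace E] {C : Set E} (hCcl : IsClosed C)
    (hCcv : Convex ℝ C) {B : E → E} {K : ℝ≥0} (hmono : ∀ x y, 0 ≤ ⟪B x - B y, x - y⟫)
    (hB : LipschitzWith K B) {x₀ : E} {ρ : ℝ} (hx₀ : x₀ ∈ C)
    (hcoer : ∀ x ∈ C, ρ ≤ ‖x‖ → 0 ≤ ⟪B x, x - x₀⟫) : ∃ x, SolvesVarIneq C B x := by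
  have hε (n : ℕ) : (0 : ℝ) < 1 / (n + 1) := by positivity
  choose u hu using fun n => exists_solvesVarIneq_add_smul ⟨x₀, hx₀⟩ hCcl hCcv hmono hB (hε n)
  have hcauchy : CauchySeq u := by
    refine cauchySeq_of_norm_sub_sq_le (fun n => (hu n).norm_le_of_coercive (hε n) hx₀ hcoer)
      fun n m hnm => ?_
    rcases hnm.lt_or_eq with hlt | rfl
    · exact (hu n).norm_sub_sq_le hmono (hε m) (Nat.one_div_lt_one_div hlt) (hu m)
    · simp
  obtain ⟨x, hx⟩ := cauchySeq_tendsto_of_complete hcauchy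
  exact ⟨x, solvesVarIneq_of_tendsto hCcl hB.continuous tendsto_one_div_add_atTop_nhds_zero_nat
    hx hu⟩

end Hilbert

section Prox

variable {E : Type*} [NormedAddCommGroup E] [InnerProductSpace ℝ E] {g : E → ℝ} {F : E → E}

/-- When `F` is the proximity operator of `g`, this is the Fenchel conjugate of
`g + ‖·‖² / 2`, the supremum being attained at `F u`. -/
noncomputable def proxPotential (g : E → ℝ) (F : E → E) (u : E) : ℝ :=
  ⟪u, F u⟫ - ‖F u‖ ^ 2 / 2 - g (F u)

theorem le_proxPotential (hprox : ∀ y z, g (F y) + ‖y - F y‖ ^ 2 / 2 ≤ g z + ‖y - z‖ ^ 2 / 2)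
    (u z : E) : ⟪u, z⟫ - ‖z‖ ^ 2 / 2 - g z ≤ proxPotential g F u := by
  have h := hprox u z
  rw [norm_sub_sq_real, norm_sub_sq_real] at h
  unfold proxPotential
  linarith

theorem proxPotential_add_inner_le
    (hprox : ∀ y z, g (F y) + ‖y - F y‖ ^ 2 / 2 ≤ g z + ‖y - z‖ ^ 2 / 2) (u v : E) :
    proxPotential g F u + ⟪F u, v - u⟫ ≤ proxPotential g F v := by
  have h := le_proxPotential hprox v (F u)
  rw [proxPotential, inner_sub_right, real_inner_comm u, real_inner_comm v]
  linarith

theorem exists_le_proxPotential_sub_inner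
    (hprox : ∀ y z, g (F y) + ‖y - F y‖ ^ 2 / 2 ≤ g z + ‖y - z‖ ^ 2 / 2) {q : E}
    (hg : ContinuousAt g q) : ∃ δ > 0, ∃ c, ∀ u, δ * ‖u‖ - c ≤ proxPotential g F u - ⟪q, u⟫ := by
  obtain ⟨δ, hδ, hball⟩ := Metric.continuousAt_iff.1 hg 1 one_pos
  refine ⟨δ / 2, by positivity, (‖q‖ + δ / 2) ^ 2 / 2 + (g q + 1), fun u => ?_⟩
  -- for `u = 0` the junk value `δ / 2 / 0 = 0` gives `z = q`, which still works
  set z := q + (δ / 2 / ‖u‖) • u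
  obtain ⟨hzu, hzq⟩ : ⟪u, z⟫ = ⟪q, u⟫ + δ / 2 * ‖u‖ ∧ ‖z - q‖ ≤ δ / 2 := by
    rw [inner_add_right, real_inner_smul_right, real_inner_self_eq_norm_sq, real_inner_comm,
      add_sub_cancel_left, norm_smul, Real.norm_of_nonneg (by positivity)]
    rcases (norm_nonneg u).eq_or_lt with hu | hu
    · exact ⟨by simp [← hu], by simpa [← hu] using (half_pos hδ).le⟩
    · constructor
      · field_simp
      · field_simp; rfl
  have hgz : g z ≤ g q + 1 := by
    have := hball (show dist z q < δ by rw [dist_eq_norm]; linarith)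
    rw [Real.dist_eq] at this
    linarith [le_abs_self (g z - g q)]
  have hz : ‖z‖ ^ 2 ≤ (‖q‖ + δ / 2) ^ 2 := by
    refine pow_le_pow_left₀ (norm_nonneg _) ?_ 2
    calc ‖z‖ = ‖q + (z - q)‖ := by rw [add_sub_cancel]
      _ ≤ ‖q‖ + δ / 2 := (norm_add_le _ _).trans (by linarith)
  linarith [le_proxPotential hprox u z]

theorem exists_le_inner_sub_of_prox
    (hprox : ∀ y z, g (F y) + ‖y - F y‖ ^ 2 / 2 ≤ g z + ‖y - z‖ ^ 2 / 2) {q : E}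
    (hg : ContinuousAt g q) (u₀ : E) : ∃ δ > 0, ∃ c, ∀ u, δ * ‖u‖ - c ≤ ⟪F u - q, u - u₀⟫ := by
  obtain ⟨δ, hδ, c, hc⟩ := exists_le_proxPotential_sub_inner hprox hg
  refine ⟨δ, hδ, c + proxPotential g F u₀ - ⟪q, u₀⟫, fun u => ?_⟩
  have h := proxPotential_add_inner_le hprox u u₀
  rw [← neg_sub u u₀, inner_neg_right] at h
  rw [inner_sub_left, inner_sub_right q]
  linarith [hc u]

end Prox

theorem ContinuousLinearMap.exists_norm_le_mul_norm_apply_of_surjective_adjoint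
    {E G : Type*} [NormedAddCommGroup E] [InnerProductSpace ℝ E] [CompleteSpace E]
    [NormedAddCommGroup G] [InnerProductSpace ℝ G] [CompleteSpace G] (A : E →L[ℝ] G)
    (h : Function.Surjective (adjoint A)) : ∃ c > 0, ∀ x, ‖x‖ ≤ c * ‖A x‖ := by
  obtain ⟨c, hc, hpre⟩ := (adjoint A).exists_preimage_norm_le h
  refine ⟨c, hc, fun x => ?_⟩
  obtain ⟨w, hw, hwx⟩ := hpre x
  have hsq : ‖x‖ ^ 2 ≤ ‖A x‖ * (c * ‖x‖) :=
    calc ‖x‖ ^ 2 = ⟪A x, w⟫ := by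
          rw [← adjoint_inner_right, hw, real_inner_self_eq_norm_sq]
      _ ≤ ‖A x‖ * ‖w‖ := real_inner_le_norm _ _
      _ ≤ ‖A x‖ * (c * ‖x‖) := by gcongr
  nlinarith [mul_nonneg hc.le (norm_nonneg (A x)), norm_nonneg x]

section Relaxed

variable {H : Type*} [NormedAddCommGroup H] [InnerProductSpace ℝ H] [CompleteSpace H]
  {I : Type*} [Fintype I] {G : I → Type*} [∀ i, NormedAddCommGroup (G i)]
  [∀ i, InnerProductSpace ℝ (G i)] [∀ i, CompleteSpace (G i)]

noncomputable def relaxedOperator (ω : I → ℝ) (L : ∀ i, H →L[ℝ] G i) (F : ∀ i, G i → G i)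
    (p : ∀ i, G i) (x : H) : H :=
  ∑ j, ω j • ContinuousLinearMap.adjoint (L j) (F j (L j x) - p j)

variable {ω : I → ℝ} {L : ∀ i, H →L[ℝ] G i} {F : ∀ i, G i → G i} {p : ∀ i, G i}

theorem inner_relaxedOperator (x y : H) :
    ⟪relaxedOperator ω L F p x, y⟫ = ∑ j, ω j * ⟪L j y, F j (L j x) - p j⟫ := by
  rw [relaxedOperator, sum_inner]
  refine Finset.sum_congr rfl fun j _ => ?_
  rw [real_inner_smul_left, ContinuousLinearMap.adjoint_inner_left, real_inner_comm]

theorem inner_relaxedOperator_sub (x y : H) :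
    ⟪relaxedOperator ω L F p x - relaxedOperator ω L F p y, x - y⟫
      = ∑ j, ω j * ⟪L j x - L j y, F j (L j x) - F j (L j y)⟫ := by
  rw [inner_sub_left, inner_relaxedOperator, inner_relaxedOperator, ← Finset.sum_sub_distrib]
  refine Finset.sum_congr rfl fun j _ => ?_
  rw [← mul_sub, ← inner_sub_right, map_sub, sub_sub_sub_cancel_right]

theorem mul_inner_le_inner_relaxedOperator_sub (hω : ∀ j, 0 ≤ ω j)
    (hF : ∀ j, FirmlyNonexpansive (F j)) (i : I) (x y : H) :
    ω i * ⟪L i x - L i y, F i (L i x) - F i (L i y)⟫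
      ≤ ⟪relaxedOperator ω L F p x - relaxedOperator ω L F p y, x - y⟫ := by
  rw [inner_relaxedOperator_sub]
  exact Finset.single_le_sum (f := fun j => ω j * ⟪L j x - L j y, F j (L j x) - F j (L j y)⟫)
    (fun j _ => mul_nonneg (hω j) ((hF j).inner_nonneg _ _)) (Finset.mem_univ i)

theorem inner_relaxedOperator_sub_nonneg (hω : ∀ j, 0 ≤ ω j)
    (hF : ∀ j, FirmlyNonexpansive (F j)) (x y : H) :
    0 ≤ ⟪relaxedOperator ω L F p x - relaxedOperator ω L F p y, x - y⟫ := by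
  rw [inner_relaxedOperator_sub]
  exact Finset.sum_nonneg fun j _ => mul_nonneg (hω j) ((hF j).inner_nonneg _ _)

theorem exists_lipschitzWith_relaxedOperator {K : I → ℝ≥0}
    (hF : ∀ j, LipschitzWith (K j) (F j)) : ∃ K, LipschitzWith K (relaxedOperator ω L F p) :=
  ⟨_, LipschitzWith.finset_sum fun j _ =>
    ((ω j • ContinuousLinearMap.adjoint (L j)).lipschitz.comp
      ((hF j).sub (LipschitzWith.const (p j)))).comp (L j).lipschitz⟩

theorem exists_forall_le_norm_inner_relaxedOperator_nonneg (hω : ∀ j, 0 < ω j)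
    (hF : ∀ j, FirmlyNonexpansive (F j)) {i : I}
    (hadj : Function.Surjective (ContinuousLinearMap.adjoint (L i))) {g : G i → ℝ}
    (hg : Continuous g)
    (hprox : ∀ y z, g (F i y) + ‖y - F i y‖ ^ 2 / 2 ≤ g z + ‖y - z‖ ^ 2 / 2) (x₀ : H) :
    ∃ ρ, ∀ x, ρ ≤ ‖x‖ → 0 ≤ ⟪relaxedOperator ω L F p x, x - x₀⟫ := by
  obtain ⟨c, hc, hLi⟩ := (L i).exists_norm_le_mul_norm_apply_of_surjective_adjoint hadj
  obtain ⟨w, hw⟩ := hadj (relaxedOperator ω L F p x₀)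
  set q := F i (L i x₀) - (ω i)⁻¹ • w
  obtain ⟨δ, hδ, c', hgrowth⟩ := exists_le_inner_sub_of_prox hprox hg.continuousAt (q := q) (L i x₀)
  refine ⟨c * (c' / δ), fun x hx => ?_⟩
  -- `B x₀ = L i† w` and monotonicity of the terms `j ≠ i` leave only the `i`-th term
  have hlower : ω i * ⟪F i (L i x) - q, L i x - L i x₀⟫ ≤ ⟪relaxedOperator ω L F p x, x - x₀⟫ := by
    have hmono := mul_inner_le_inner_relaxedOperator_sub (L := L) (p := p) (hω · |>.le) hF i x x₀
    have hw' : ⟪relaxedOperator ω L F p x₀, x - x₀⟫ = ⟪w, L i x - L i x₀⟫ := by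
      rw [← hw, ContinuousLinearMap.adjoint_inner_left, map_sub]
    have hq : F i (L i x) - q = (F i (L i x) - F i (L i x₀)) + (ω i)⁻¹ • w := by
      simp only [q]; abel
    rw [hq, inner_add_left, real_inner_smul_left, mul_add, ← mul_assoc,
      mul_inv_cancel₀ (hω i).ne', one_mul, real_inner_comm (L i x - L i x₀)]
    rw [inner_sub_left (relaxedOperator ω L F p x)] at hmono
    linarith
  have hLx : c' ≤ δ * ‖L i x‖ := by
    have := le_of_mul_le_mul_left (hx.trans (hLi x)) hc
    rw [div_le_iff₀ hδ] at this
    linarith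
  exact (mul_nonneg (hω i).le (by linarith [hgrowth (L i x)])).trans hlower

end Relaxed

theorem relaxed_has_solution_of_prox_general
    {H : Type*} [NormedAddCommGroup H] [InnerProductSpace ℝ H] [CompleteSpace H]
    {I : Type*} [Fintype I]
    (G : I → Type*) [∀ i, NormedAddCommGroup (G i)] [∀ i, InnerProductSpace ℝ (G i)]
    [∀ i, CompleteSpace (G i)]
    (ω : I → ℝ) (hω : ∀ i, ω i ∈ Set.Ioo (0 : ℝ) 1)
    (C : Set H) (hCne : C.Nonempty) (hCcl : IsClosed C) (hCcv : Convex ℝ C)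
    (p : ∀ i, G i) (L : ∀ i, H →L[ℝ] G i)
    (F : ∀ i, G i → G i)
    (hF : ∀ i, ∀ u v : G i, ⟪u - v, F i u - F i v⟫ ≥ ‖F i u - F i v‖ ^ 2)
    (i : I) (hadj : Function.Surjective (ContinuousLinearMap.adjoint (L i)))
    (g : G i → ℝ) (hgc : Continuous g)
    (hprox : ∀ y z : G i, z ≠ F i y →
      g (F i y) + ‖y - F i y‖ ^ 2 / 2 < g z + ‖y - z‖ ^ 2 / 2) :
    ∃ x ∈ C, ∀ y ∈ C, (∑ i, ω i * ⟪L i (y - x), F i (L i x) - p i⟫) ≥ 0 := by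
  obtain ⟨x₀, hx₀⟩ := hCne
  have hprox' y z : g (F i y) + ‖y - F i y‖ ^ 2 / 2 ≤ g z + ‖y - z‖ ^ 2 / 2 := by
    rcases eq_or_ne z (F i y) with rfl | hz
    · exact le_rfl
    · exact (hprox y z hz).le
  obtain ⟨ρ, hcoer⟩ := exists_forall_le_norm_inner_relaxedOperator_nonneg (p := p)
    (fun j => (hω j).1) hF hadj hgc hprox' x₀
  obtain ⟨K, hK⟩ := exists_lipschitzWith_relaxedOperator (ω := ω) (L := L) (p := p)
    fun j => FirmlyNonexpansive.lipschitzWith (hF j)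
  obtain ⟨x, hxC, hx⟩ := exists_solvesVarIneq_of_coercive hCcl hCcv
    (inner_relaxedOperator_sub_nonneg (fun j => (hω j).1.le) hF) hK hx₀ fun x _ => hcoer x
  refine ⟨x, hxC, fun y hy => ?_⟩
  rw [ge_iff_le, ← inner_relaxedOperator]
  exact hx y hy

/-- If for some `i`, `Lᵢ*` is surjective and `Fᵢ` is the proximity operator of a
continuous convex real-valued function, the relaxed variational inequality problem has a
solution. -/
theorem relaxed_has_solution_of_prox
    {H : Type*} [NormedAddCommGroup H] [InnerProductSpace ℝ H] [CompleteSpace H]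
    {I : Type*} [Fintype I] [Nonempty I]
    (G : I → Type*) [∀ i, NormedAddCommGroup (G i)] [∀ i, InnerProductSpace ℝ (G i)]
    [∀ i, CompleteSpace (G i)]
    (ω : I → ℝ) (hω : ∀ i, ω i ∈ Set.Ioo (0 : ℝ) 1) (hωsum : ∑ i, ω i = 1)
    (C : Set H) (hCne : C.Nonempty) (hCcl : IsClosed C) (hCcv : Convex ℝ C)
    (p : ∀ i, G i) (L : ∀ i, H →L[ℝ] G i) (hL : ∀ i, L i ≠ 0)
    (F : ∀ i, G i → G i)
    (hF : ∀ i, ∀ u v : G i, ⟪u - v, F i u - F i v⟫ ≥ ‖F i u - F i v‖ ^ 2)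
    (i : I) (hadj : Function.Surjective (ContinuousLinearMap.adjoint (L i)))
    (g : G i → ℝ) (hgc : Continuous g) (hgcv : ConvexOn ℝ Set.univ g)
    (hprox : ∀ y z : G i, z ≠ F i y →
      g (F i y) + ‖y - F i y‖ ^ 2 / 2 < g z + ‖y - z‖ ^ 2 / 2) :
    ∃ x ∈ C, ∀ y ∈ C, (∑ i, ω i * ⟪L i (y - x), F i (L i x) - p i⟫) ≥ 0 :=
  relaxed_has_solution_of_prox_general G ω hω C hCne hCcl hCcv p L F hF i hadj g hgc hprox
end

section
/- Suppose that, for every i ∈ I, there is a proper lower semicontinuous convex function g_i : G_i → (−∞, +∞] such that F_i is the proximity operator of g_i, i.e., for every y ∈ G_i, F_i y is the unique minimizer over G_i of z ↦ g_i(z) + ‖y − z‖²/2. Let g_i* denote the Fenchel conjugate of g_i, g_i*(u) = sup_{z∈G_i} (⟪z, u⟫ − g_i(z)), and let ẽ_i denote the Moreau envelope of g_i*, ẽ_i(u) = inf_{z∈G_i} (g_i*(z) + ‖u − z‖²/2), which is real-valued on G_i. Define f : H → ℝ by f(x) = (1/2) Σ_{i∈I} ω_i (ẽ_i(L_i x)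 − ⟪L_i x, p_i⟫). Then a point x ∈ H is a solution to the relaxed problem (that is, x ∈ C and Σ_{i∈I} ω_i ⟪L_i(y − x), F_i(L_i x) − p_i⟫ ≥ 0 for every y ∈ C) if and only if x minimizes f over C. -/
/-!
Since `F = prox g` with `g` convex, `u - F u` is a subgradient of `g` at `F u` (compare `F u`
with the points of the segment from `F u` to any `w`). This yields the closed form
`ẽ u = ‖u‖²/2 - ‖u - F u‖²/2 - g (F u)` for the Moreau envelope of `g*`, and with it the
two-sided estimate `⟪F v, u - v⟫ ≤ ẽ u - ẽ v ≤ ⟪F v, u - v⟫ + ‖u - v‖²/2`: `ẽ` is convex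
with gradient `F`. Consequently `f` is convex and differentiable with directional derivative
`½ Σᵢ ωᵢ ⟪Lᵢ h, Fᵢ (Lᵢ x) - pᵢ⟫` at `x`, and the relaxed problem is the first-order
optimality condition for minimizing `f` over the convex set `C`.
-/

open RealInnerProductSpace Set Filter Topology

theorem nonneg_of_forall_mul_add_sq_mul_nonneg {a b : ℝ}
    (h : ∀ t ∈ Ioc (0 : ℝ) 1, 0 ≤ t * a + t ^ 2 * b) : 0 ≤ a := by
  have hlim : Tendsto (fun t : ℝ => a + t * b) (𝓝[>] 0) (𝓝 a) := by
    have : Continuous fun t : ℝ => a + t * b := by fun_prop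
    simpa using (this.tendsto 0).mono_left nhdsWithin_le_nhds
  refine ge_of_tendsto hlim ?_
  filter_upwards [Ioc_mem_nhdsGT one_pos] with t ht
  refine (mul_nonneg_iff_of_pos_left ht.1).mp ?_
  linarith [h t ht]

theorem forall_nonneg_iff_isMinOn_of_bounds {E : Type*} [AddCommGroup E] [Module ℝ E]
    {C : Set E} (hC : Convex ℝ C) {φ d q : E → ℝ} {x : E} (hx : x ∈ C)
    (hlower : ∀ h, d h ≤ φ (x + h) - φ x)
    (hupper : ∀ h, ∀ t ∈ Ioc (0 : ℝ) 1, φ (x + t • h) - φ x ≤ t * d h + t ^ 2 * q h) :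
    (∀ y ∈ C, 0 ≤ d (y - x)) ↔ IsMinOn φ C x := by
  refine ⟨fun h => isMinOn_iff.mpr fun y hy => ?_, fun h y hy => ?_⟩
  · linarith [h y hy, add_sub_cancel x y ▸ hlower (y - x)]
  · refine nonneg_of_forall_mul_add_sq_mul_nonneg (b := q (y - x)) fun t ht => ?_
    have hxt : x + t • (y - x) ∈ C := hC.add_smul_sub_mem hx hy ⟨ht.1.le, ht.2⟩
    linarith [isMinOn_iff.mp h _ hxt, hupper (y - x) t ht]

section Prox

variable {E : Type*} [NormedAddCommGroup E] {g : E → EReal} {F : E → E}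

def IsProxOf (g : E → EReal) (F : E → E) : Prop :=
  ∀ y z, z ≠ F y →
    g (F y) + ((‖y - F y‖ ^ 2 / 2 : ℝ) : EReal) < g z + ((‖y - z‖ ^ 2 / 2 : ℝ) : EReal)

theorem IsProxOf.le (hF : IsProxOf g F) (y z : E) :
    g (F y) + ((‖y - F y‖ ^ 2 / 2 : ℝ) : EReal) ≤
      g z + ((‖y - z‖ ^ 2 / 2 : ℝ) : EReal) := by
  rcases eq_or_ne z (F y) with rfl | hz
  · exact le_rfl
  · exact (hF y z hz).le

theorem IsProxOf.ne_top (hF : IsProxOf g F) (hproper : ∃ z, g z ≠ ⊤) (y : E) :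
    g (F y) ≠ ⊤ := by
  obtain ⟨z, hz⟩ := hproper
  intro htop
  have := hF.le y z
  rw [htop, EReal.top_add_coe, top_le_iff] at this
  exact EReal.add_ne_top hz (EReal.coe_ne_top _) this

noncomputable def moreauEnv (h : E → EReal) (u : E) : EReal :=
  ⨅ z, h z + ((‖u - z‖ ^ 2 / 2 : ℝ) : EReal)

variable [InnerProductSpace ℝ E]

-- Mathlib's `ConvexOn` does not apply: `EReal` is not an `ℝ`-module.
def ConvexEReal (g : E → EReal) : Prop :=
  ∀ z w : E, ∀ a b : ℝ, 0 ≤ a → 0 ≤ b → a + b = 1 →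
    g (a • z + b • w) ≤ (a : EReal) * g z + (b : EReal) * g w

noncomputable def fenchelConj (g : E → EReal) (z : E) : EReal :=
  ⨆ w, ((⟪w, z⟫ : ℝ) : EReal) - g w

theorem IsProxOf.toReal_add_inner_le (hF : IsProxOf g F) (hnotbot : ∀ z, g z ≠ ⊥)
    (hconv : ConvexEReal g) {v w : E}
    (hv : g (F v) ≠ ⊤) (hw : g w ≠ ⊤) :
    (g (F v)).toReal + ⟪v - F v, w - F v⟫ ≤ (g w).toReal := by
  set γ := (g (F v)).toReal
  set β := (g w).toReal
  have hγ : g (F v) = γ := (EReal.coe_toReal hv (hnotbot _)).symm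
  have hβ : g w = β := (EReal.coe_toReal hw (hnotbot _)).symm
  suffices ∀ t ∈ Ioc (0 : ℝ) 1,
      0 ≤ t * (β - γ - ⟪v - F v, w - F v⟫) + t ^ 2 * (‖w - F v‖ ^ 2 / 2) by
    linarith [nonneg_of_forall_mul_add_sq_mul_nonneg this]
  intro t ht
  have hconv_t := hconv (F v) w (1 - t) t (by linarith [ht.2]) ht.1.le (by ring)
  have hprox_t := hF.le v ((1 - t) • F v + t • w)
  rw [hγ, hβ] at hconv_t
  rw [hγ] at hprox_t
  have key : γ + ‖v - F v‖ ^ 2 / 2 ≤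
      (1 - t) * γ + t * β + ‖v - ((1 - t) • F v + t • w)‖ ^ 2 / 2 := by
    exact_mod_cast hprox_t.trans (add_le_add hconv_t le_rfl)
  have hsplit : v - ((1 - t) • F v + t • w) = (v - F v) - t • (w - F v) := by module
  rw [hsplit, norm_sub_sq_real (v - F v), real_inner_smul_right, norm_smul, mul_pow,
    Real.norm_eq_abs, sq_abs] at key
  nlinarith

theorem IsProxOf.moreauEnv_fenchelConj (hF : IsProxOf g F) (hproper : ∃ z, g z ≠ ⊤)
    (hnotbot : ∀ z, g z ≠ ⊥) (hconv : ConvexEReal g) (u : E) :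
    moreauEnv (fenchelConj g) u =
      ((‖u‖ ^ 2 / 2 - ‖u - F u‖ ^ 2 / 2 - (g (F u)).toReal : ℝ) : EReal) := by
  set γ := (g (F u)).toReal
  have hγ : g (F u) = γ := (EReal.coe_toReal (hF.ne_top hproper u) (hnotbot _)).symm
  apply le_antisymm
  · have hconj : fenchelConj g (u - F u) ≤ ((⟪F u, u - F u⟫ - γ : ℝ) : EReal) := by
      refine iSup_le fun w => ?_
      rcases eq_or_ne (g w) ⊤ with hw | hw
      · rw [hw, EReal.sub_top]; exact bot_le
      · have := hF.toReal_add_inner_le hnotbot hconv (hF.ne_top hproper u) hw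
        rw [← EReal.coe_toReal hw (hnotbot w), ← EReal.coe_sub, EReal.coe_le_coe_iff]
        simp only [inner_sub_left, inner_sub_right, real_inner_comm] at this ⊢
        linarith
    refine (iInf_le _ (u - F u)).trans ((add_le_add hconj le_rfl).trans_eq ?_)
    rw [← EReal.coe_add, EReal.coe_eq_coe_iff, sub_sub_cancel]
    simp only [norm_sub_sq_real, inner_sub_right, real_inner_self_eq_norm_sq, real_inner_comm]
    ring
  · refine le_iInf fun z => ?_
    have hconj : ((⟪F u, z⟫ - γ : ℝ) : EReal) ≤ fenchelConj g z := by
      refine le_trans ?_ (le_iSup _ (F u))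
      rw [hγ, EReal.coe_sub]
    refine le_trans ?_ (add_le_add hconj le_rfl)
    rw [← EReal.coe_add, EReal.coe_le_coe_iff]
    have := sq_nonneg ‖u - F u - z‖
    simp only [norm_sub_sq_real, inner_sub_left, real_inner_comm] at this ⊢
    linarith

theorem IsProxOf.inner_le_toReal_moreauEnv_sub (hF : IsProxOf g F) (hproper : ∃ z, g z ≠ ⊤)
    (hnotbot : ∀ z, g z ≠ ⊥) (hconv : ConvexEReal g) (u v : E) :
    ⟪F v, u - v⟫ ≤
      (moreauEnv (fenchelConj g) u).toReal - (moreauEnv (fenchelConj g) v).toReal := by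
  simp only [hF.moreauEnv_fenchelConj hproper hnotbot hconv, EReal.toReal_coe]
  have hsub := hF.toReal_add_inner_le hnotbot hconv (w := F v)
    (hF.ne_top hproper u) (hF.ne_top hproper v)
  have hsq := sq_nonneg ‖F u - F v‖
  simp only [norm_sub_sq_real, inner_sub_left, inner_sub_right, real_inner_self_eq_norm_sq,
    real_inner_comm] at hsub hsq ⊢
  linarith

theorem IsProxOf.toReal_moreauEnv_sub_le (hF : IsProxOf g F) (hproper : ∃ z, g z ≠ ⊤)
    (hnotbot : ∀ z, g z ≠ ⊥) (hconv : ConvexEReal g) (u v : E) :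
    (moreauEnv (fenchelConj g) u).toReal - (moreauEnv (fenchelConj g) v).toReal ≤
      ⟪F v, u - v⟫ + ‖u - v‖ ^ 2 / 2 := by
  simp only [hF.moreauEnv_fenchelConj hproper hnotbot hconv, EReal.toReal_coe]
  have hsub := hF.toReal_add_inner_le hnotbot hconv (w := F u)
    (hF.ne_top hproper v) (hF.ne_top hproper u)
  have hsq := sq_nonneg ‖(u - v) - (F u - F v)‖
  simp only [norm_sub_sq_real, inner_sub_left, inner_sub_right, real_inner_self_eq_norm_sq,
    real_inner_comm] at hsub hsq ⊢
  linarith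

end Prox

section Composite

variable {H G : Type*} [NormedAddCommGroup H] [InnerProductSpace ℝ H]
  [NormedAddCommGroup G] [InnerProductSpace ℝ G] {e : G → ℝ} {D : G → G}

theorem inner_le_sub_of_comp (he : ∀ u v, ⟪D v, u - v⟫ ≤ e u - e v) (L : H →L[ℝ] G) (p : G)
    (x h : H) :
    ⟪L h, D (L x) - p⟫ ≤ (e (L (x + h)) - ⟪L (x + h), p⟫) - (e (L x) - ⟪L x, p⟫) := by
  have := he (L (x + h)) (L x)
  rw [map_add, add_sub_cancel_left] at this
  rw [map_add, inner_add_left, inner_sub_right, real_inner_comm (D (L x))]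
  linarith

theorem sub_le_of_comp (he : ∀ u v, e u - e v ≤ ⟪D v, u - v⟫ + ‖u - v‖ ^ 2 / 2)
    (L : H →L[ℝ] G) (p : G) (x h : H) :
    (e (L (x + h)) - ⟪L (x + h), p⟫) - (e (L x) - ⟪L x, p⟫) ≤
      ⟪L h, D (L x) - p⟫ + ‖L h‖ ^ 2 / 2 := by
  have := he (L (x + h)) (L x)
  rw [map_add, add_sub_cancel_left] at this
  rw [map_add, inner_add_left, inner_sub_right, real_inner_comm (D (L x))]
  linarith

end Composite

theorem relaxed_iff_minimizer_general
    {H : Type*} [NormedAddCommGroup H] [InnerProductSpace ℝ H]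
    {I : Type*} [Fintype I]
    (G : I → Type*) [∀ i, NormedAddCommGroup (G i)] [∀ i, InnerProductSpace ℝ (G i)]
    (ω : I → ℝ) (hω : ∀ i, ω i ∈ Set.Ioo (0 : ℝ) 1)
    (C : Set H) (hCcv : Convex ℝ C)
    (p : ∀ i, G i) (L : ∀ i, H →L[ℝ] G i)
    (F : ∀ i, G i → G i)
    (g : ∀ i, G i → EReal)
    (hproper : ∀ i, ∃ z, g i z ≠ ⊤) (hnotbot : ∀ i, ∀ z, g i z ≠ ⊥)
    (hconv : ∀ i, ∀ z w : G i, ∀ a b : ℝ, 0 ≤ a → 0 ≤ b → a + b = 1 →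
      g i (a • z + b • w) ≤ (a : EReal) * g i z + (b : EReal) * g i w)
    (hprox : ∀ i, ∀ y z : G i, z ≠ F i y →
      g i (F i y) + ((‖y - F i y‖ ^ 2 / 2 : ℝ) : EReal)
        < g i z + ((‖y - z‖ ^ 2 / 2 : ℝ) : EReal))
    (env : ∀ i, G i → EReal)
    (henv : ∀ i, ∀ u : G i, env i u =
      ⨅ z : G i, ((⨆ w : G i, ((⟪w, z⟫ : ℝ) : EReal) - g i w)
        + ((‖u - z‖ ^ 2 / 2 : ℝ) : EReal)))
    (f : H → ℝ)
    (hf : ∀ x : H, f x = (1 / 2) * ∑ i, ω i * ((env i (L i x)).toReal - ⟪L i x, p i⟫)) :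
    ∀ x : H,
      (x ∈ C ∧ ∀ y ∈ C, (∑ i, ω i * ⟪L i (y - x), F i (L i x) - p i⟫) ≥ 0) ↔
      (x ∈ C ∧ ∀ y ∈ C, f x ≤ f y) := by
  have hlower (i) (u v : G i) : ⟪F i v, u - v⟫ ≤ (env i u).toReal - (env i v).toReal := by
    rw [henv, henv]
    exact IsProxOf.inner_le_toReal_moreauEnv_sub (hprox i) (hproper i) (hnotbot i) (hconv i) u v
  have hupper (i) (u v : G i) :
      (env i u).toReal - (env i v).toReal ≤ ⟪F i v, u - v⟫ + ‖u - v‖ ^ 2 / 2 := by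
    rw [henv, henv]
    exact IsProxOf.toReal_moreauEnv_sub_le (hprox i) (hproper i) (hnotbot i) (hconv i) u v
  intro x
  have hdiff (h : H) : f (x + h) - f x = 1 / 2 * ∑ i, ω i *
      (((env i (L i (x + h))).toReal - ⟪L i (x + h), p i⟫) -
        ((env i (L i x)).toReal - ⟪L i x, p i⟫)) := by
    simp only [hf, mul_sub, Finset.sum_sub_distrib]
  refine and_congr_right fun hx => ?_
  have key := forall_nonneg_iff_isMinOn_of_bounds hCcv hx (φ := f)
    (d := fun h => 1 / 2 * ∑ i, ω i * ⟪L i h, F i (L i x) - p i⟫)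
    (q := fun h => 1 / 4 * ∑ i, ω i * ‖L i h‖ ^ 2) ?_ ?_
  · simpa [isMinOn_iff] using key
  · intro h
    rw [hdiff]
    gcongr with i
    exacts [(hω i).1.le, inner_le_sub_of_comp (hlower i) (L i) (p i) x h]
  · intro h t ht
    rw [hdiff]
    calc _ ≤ 1 / 2 * ∑ i, ω i *
            (⟪L i (t • h), F i (L i x) - p i⟫ + ‖L i (t • h)‖ ^ 2 / 2) := by
          gcongr with i
          exacts [(hω i).1.le, sub_le_of_comp (hupper i) (L i) (p i) x (t • h)]
      _ = _ := by
          simp only [map_smul, real_inner_smul_left, norm_smul, mul_pow, Real.norm_eq_abs, sq_abs,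
            Finset.mul_sum, ← Finset.sum_add_distrib]
          exact Finset.sum_congr rfl fun i _ => by ring

/-- When each `Fᵢ` is the proximity operator of a proper lsc convex function `gᵢ`, the
relaxed variational inequality problem is exactly the minimization over `C` of
`f : x ↦ (1/2) Σᵢ ωᵢ ((g̃ᵢ*)(Lᵢ x) - ⟪Lᵢ x, pᵢ⟫)`, where `g̃ᵢ*` is the Moreau envelope of
the Fenchel conjugate of `gᵢ`. -/
theorem relaxed_iff_minimizer
    {H : Type*} [NormedAddCommGroup H] [InnerProductSpace ℝ H] [CompleteSpace H]
    {I : Type*} [Fintype I] [Nonempty I]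
    (G : I → Type*) [∀ i, NormedAddCommGroup (G i)] [∀ i, InnerProductSpace ℝ (G i)]
    [∀ i, CompleteSpace (G i)]
    (ω : I → ℝ) (hω : ∀ i, ω i ∈ Set.Ioo (0 : ℝ) 1) (hωsum : ∑ i, ω i = 1)
    (C : Set H) (hCne : C.Nonempty) (hCcl : IsClosed C) (hCcv : Convex ℝ C)
    (p : ∀ i, G i) (L : ∀ i, H →L[ℝ] G i) (hL : ∀ i, L i ≠ 0)
    (F : ∀ i, G i → G i)
    (hF : ∀ i, ∀ u v : G i, ⟪u - v, F i u - F i v⟫ ≥ ‖F i u - F i v‖ ^ 2)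
    (g : ∀ i, G i → EReal)
    (hproper : ∀ i, ∃ z, g i z ≠ ⊤) (hnotbot : ∀ i, ∀ z, g i z ≠ ⊥)
    (hlsc : ∀ i, LowerSemicontinuous (g i))
    (hconv : ∀ i, ∀ z w : G i, ∀ a b : ℝ, 0 ≤ a → 0 ≤ b → a + b = 1 →
      g i (a • z + b • w) ≤ (a : EReal) * g i z + (b : EReal) * g i w)
    (hprox : ∀ i, ∀ y z : G i, z ≠ F i y →
      g i (F i y) + ((‖y - F i y‖ ^ 2 / 2 : ℝ) : EReal)
        < g i z + ((‖y - z‖ ^ 2 / 2 : ℝ) : EReal))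
    (env : ∀ i, G i → EReal)
    (henv : ∀ i, ∀ u : G i, env i u =
      ⨅ z : G i, ((⨆ w : G i, ((⟪w, z⟫ : ℝ) : EReal) - g i w)
        + ((‖u - z‖ ^ 2 / 2 : ℝ) : EReal)))
    (henvreal : ∀ i, ∀ u : G i, env i u ≠ ⊤ ∧ env i u ≠ ⊥)
    (f : H → ℝ)
    (hf : ∀ x : H, f x = (1 / 2) * ∑ i, ω i * ((env i (L i x)).toReal - ⟪L i x, p i⟫)) :
    ∀ x : H,
      (x ∈ C ∧ ∀ y ∈ C, (∑ i, ω i * ⟪L i (y - x), F i (L i x) - p i⟫) ≥ 0) ↔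
      (x ∈ C ∧ ∀ y ∈ C, f x ≤ f y) :=
  relaxed_iff_minimizer_general G ω hω C hCcv p L F g hproper hnotbot hconv hprox env henv f hf
end

section
/- Let G be a real Hilbert space, let A : G → Set G be maximally monotone, let β > 0, let B : G → G be β-cocoercive, and let γ ∈ (0, 2β). Let J : G → G satisfy x − J x ∈ {γ u : u ∈ A(J x)} for every x ∈ G (i.e., J is the resolvent of γA), and define F = (1 − γ/(4β))(Id − J ∘ (Id − γB)). Then F is firmly nonexpansive, and for every y ∈ G, F y = 0 if and only if 0 ∈ {u + B y : u ∈ A y} (i.e., y is a zero of A + B). -/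
/-!
Write `R = Id - J ∘ (Id - γB)`, so that `F = (1 - γ/(4β)) R`. Monotonicity of `A`, applied at
the two resolvent points, together with the cocoercivity of `B` and the completed square
`0 ≤ ‖2β(Bx - By) - (Rx - Ry)‖²`, gives `⟪x - y, Rx - Ry⟫ ≥ (1 - γ/(4β)) ‖Rx - Ry‖²`; scaling
by `1 - γ/(4β) > 0` makes this firm nonexpansiveness of `F`. The zeros of `F` are the fixed
points of `J ∘ (Id - γB)`, and a point `y` with `x - y ∈ γ A y` must be `J x`, again by
monotonicity.
-/

open RealInnerProductSpace

section Resolvent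

variable {G : Type*} [NormedAddCommGroup G] [InnerProductSpace ℝ G]
  {A : G → Set G} {γ : ℝ}

theorem inner_sub_nonneg_of_sub_eq_smul_mem
    (hmono : ∀ x y u v : G, u ∈ A x → v ∈ A y → ⟪x - y, u - v⟫ ≥ 0) (hγ : 0 ≤ γ)
    {p q u v x y : G} (hu : u ∈ A p) (hv : v ∈ A q) (hx : x - p = γ • u)
    (hy : y - q = γ • v) :
    0 ≤ ⟪p - q, (x - p) - (y - q)⟫ := by
  rw [hx, hy, ← smul_sub, real_inner_smul_right]
  exact mul_nonneg hγ (hmono p q u v hu hv)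

variable {J : G → G}

theorem inner_resolvent_sub_nonneg
    (hmono : ∀ x y u v : G, u ∈ A x → v ∈ A y → ⟪x - y, u - v⟫ ≥ 0) (hγ : 0 ≤ γ)
    (hJ : ∀ x : G, ∃ u ∈ A (J x), x - J x = γ • u) (x y : G) :
    0 ≤ ⟪J x - J y, (x - J x) - (y - J y)⟫ := by
  obtain ⟨u, hu, hxu⟩ := hJ x
  obtain ⟨v, hv, hyv⟩ := hJ y
  exact inner_sub_nonneg_of_sub_eq_smul_mem hmono hγ hu hv hxu hyv

theorem resolvent_eq_iff
    (hmono : ∀ x y u v : G, u ∈ A x → v ∈ A y → ⟪x - y, u - v⟫ ≥ 0) (hγ : 0 ≤ γ)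
    (hJ : ∀ x : G, ∃ u ∈ A (J x), x - J x = γ • u) (x y : G) :
    J x = y ↔ ∃ u ∈ A y, x - y = γ • u := by
  constructor
  · rintro rfl
    exact hJ x
  · rintro ⟨w, hw, hxw⟩
    obtain ⟨u, hu, hxu⟩ := hJ x
    have h := inner_sub_nonneg_of_sub_eq_smul_mem hmono hγ hu hw hxu hxw
    rw [sub_sub_sub_cancel_left, ← neg_sub (J x) y, inner_neg_right,
      real_inner_self_eq_norm_sq, neg_nonneg] at h
    exact sub_eq_zero.mp (norm_eq_zero.mp (pow_eq_zero_iff two_ne_zero |>.mp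
      (le_antisymm h (sq_nonneg _))))

end Resolvent

section ForwardBackward

variable {G : Type*} [NormedAddCommGroup G] [InnerProductSpace ℝ G] {β : ℝ}

theorem real_inner_sub_mul_norm_sq_le (hβ : 0 < β) (d e : G) :
    ⟪d, e⟫ - β * ‖e‖ ^ 2 ≤ ‖d‖ ^ 2 / (4 * β) := by
  have hsq : 0 ≤ ‖(2 * β) • e - d‖ ^ 2 := sq_nonneg _
  rw [norm_sub_sq_real, norm_smul, real_inner_smul_left, real_inner_comm,
    Real.norm_of_nonneg (by positivity)] at hsq
  rw [le_div_iff₀ (by positivity)]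
  nlinarith

theorem inner_sub_forwardBackward_residual_ge {A : G → Set G} {B J : G → G} {γ : ℝ}
    (hmono : ∀ x y u v : G, u ∈ A x → v ∈ A y → ⟪x - y, u - v⟫ ≥ 0) (hβ : 0 < β)
    (hB : ∀ x y : G, ⟪x - y, B x - B y⟫ ≥ β * ‖B x - B y‖ ^ 2) (hγ : 0 ≤ γ)
    (hJ : ∀ x : G, ∃ u ∈ A (J x), x - J x = γ • u) (x y : G) :
    (1 - γ / (4 * β)) * ‖(x - J (x - γ • B x)) - (y - J (y - γ • B y))‖ ^ 2 ≤
      ⟪x - y, (x - J (x - γ • B x)) - (y - J (y - γ • B y))⟫ := by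
  set s := x - y
  set d := (x - J (x - γ • B x)) - (y - J (y - γ • B y))
  set e := B x - B y
  have hJmono := inner_resolvent_sub_nonneg hmono hγ hJ (x - γ • B x) (y - γ • B y)
  have hres : J (x - γ • B x) - J (y - γ • B y) = s - d := by simp only [s, d]; abel
  have hfwd : (x - γ • B x - J (x - γ • B x)) - (y - γ • B y - J (y - γ • B y)) =
      d - γ • e := by simp only [d, e, smul_sub]; abel
  rw [hres, hfwd] at hJmono
  simp only [inner_sub_left, inner_sub_right, real_inner_smul_right,
    real_inner_self_eq_norm_sq] at hJmono
  have hsq := mul_le_mul_of_nonneg_left (real_inner_sub_mul_norm_sq_le hβ d e) hγ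
  have hcoco : γ * (β * ‖e‖ ^ 2) ≤ γ * ⟪s, e⟫ := mul_le_mul_of_nonneg_left (hB x y) hγ
  rw [mul_sub] at hsq
  have hsplit : (1 - γ / (4 * β)) * ‖d‖ ^ 2 = ‖d‖ ^ 2 - γ * (‖d‖ ^ 2 / (4 * β)) := by ring
  linarith

theorem smul_firmly_nonexpansive_of_inner_ge {R : G → G} {c : ℝ} (hc : 0 ≤ c)
    (hR : ∀ x y : G, c * ‖R x - R y‖ ^ 2 ≤ ⟪x - y, R x - R y⟫) (x y : G) :
    ‖c • R x - c • R y‖ ^ 2 ≤ ⟪x - y, c • R x - c • R y⟫ := by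
  rw [← smul_sub, norm_smul, real_inner_smul_right, Real.norm_of_nonneg hc, mul_pow, sq c,
    mul_assoc]
  exact mul_le_mul_of_nonneg_left (hR x y) hc

end ForwardBackward

theorem forward_backward_residual_firmly_nonexpansive_general
    {G : Type*} [NormedAddCommGroup G] [InnerProductSpace ℝ G]
    (A : G → Set G)
    (hmono : ∀ x y u v : G, u ∈ A x → v ∈ A y → ⟪x - y, u - v⟫ ≥ 0)
    (β : ℝ) (hβ : 0 < β) (B : G → G)
    (hB : ∀ x y : G, ⟪x - y, B x - B y⟫ ≥ β * ‖B x - B y‖ ^ 2)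
    (γ : ℝ) (hγ : γ ∈ Set.Ioo 0 (2 * β))
    (J : G → G) (hJ : ∀ x : G, ∃ u ∈ A (J x), x - J x = γ • u)
    (F : G → G) (hF : ∀ y : G, F y = (1 - γ / (4 * β)) • (y - J (y - γ • B y))) :
    (∀ u v : G, ⟪u - v, F u - F v⟫ ≥ ‖F u - F v‖ ^ 2) ∧
    (∀ y : G, F y = 0 ↔ ∃ u ∈ A y, u + B y = 0) := by
  obtain ⟨hγ0, hγ2β⟩ := hγ
  have hc : 0 < 1 - γ / (4 * β) := by
    rw [sub_pos, div_lt_one (by positivity)]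
    linarith
  obtain rfl : F = fun y => (1 - γ / (4 * β)) • (y - J (y - γ • B y)) := funext hF
  refine ⟨smul_firmly_nonexpansive_of_inner_ge hc.le
    (inner_sub_forwardBackward_residual_ge hmono hβ hB hγ0.le hJ), fun y => ?_⟩
  rw [smul_eq_zero_iff_right hc.ne', sub_eq_zero, eq_comm, resolvent_eq_iff hmono hγ0.le hJ]
  refine exists_congr fun u => and_congr_right fun _ => ?_
  rw [sub_sub_cancel_left, ← smul_neg, smul_right_inj hγ0.ne', eq_comm,
    eq_neg_iff_add_eq_zero]

/-- For a maximally monotone `A`, a `β`-cocoercive `B`, `γ ∈ (0, 2β)`, and the resolvent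
`J` of `γA`, the operator `F = (1 - γ/(4β))(Id - J ∘ (Id - γB))` is firmly nonexpansive
and its zeros are exactly the zeros of `A + B`. -/
theorem forward_backward_residual_firmly_nonexpansive
    {G : Type*} [NormedAddCommGroup G] [InnerProductSpace ℝ G] [CompleteSpace G]
    (A : G → Set G)
    (hmono : ∀ x y u v : G, u ∈ A x → v ∈ A y → ⟪x - y, u - v⟫ ≥ 0)
    (hmax : ∀ x u : G, (∀ y v : G, v ∈ A y → ⟪x - y, u - v⟫ ≥ 0) → u ∈ A x)
    (β : ℝ) (hβ : 0 < β) (B : G → G)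
    (hB : ∀ x y : G, ⟪x - y, B x - B y⟫ ≥ β * ‖B x - B y‖ ^ 2)
    (γ : ℝ) (hγ : γ ∈ Set.Ioo 0 (2 * β))
    (J : G → G) (hJ : ∀ x : G, ∃ u ∈ A (J x), x - J x = γ • u)
    (F : G → G) (hF : ∀ y : G, F y = (1 - γ / (4 * β)) • (y - J (y - γ • B y))) :
    (∀ u v : G, ⟪u - v, F u - F v⟫ ≥ ‖F u - F v‖ ^ 2) ∧
    (∀ y : G, F y = 0 ↔ ∃ u ∈ A y, u + B y = 0) :=
  forward_backward_residual_firmly_nonexpansive_general A hmono β hβ B hB γ hγ J hJ F hF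
end

section
/- Let G be a real Hilbert space, let μ > 0, let γ ∈ (0, 1/μ), and set β = 1 − γμ. Let g : G → (−∞, +∞] be proper, lower semicontinuous, and μ-weakly convex, i.e., the function z ↦ g(z) + (μ/2)‖z‖² is convex. For every y ∈ G, the function z ↦ g(z) + ‖y − z‖²/(2γ) admits a unique minimizer, denoted Q y; then the operator Q : G → G is β-cocoercive, i.e., for all x, y ∈ G, ⟪x − y, Q x − Q y⟫ ≥ β‖Q x − Q y‖². -/
/-!
With `α = 1/γ - μ > 0`, weak convexity makes the prox objective
`z ↦ g z + ‖y - z‖² / (2γ)` `α`-strongly convex on the effective domain of `g`. A strongly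
convex function with closed sublevel sets on a complete space attains its minimum (minimizing
sequences are Cauchy by the midpoint inequality), the minimizer is unique, and the objective
grows at least like `α/2 ‖z - Q y‖²` away from it. Adding these growth inequalities for
`Q x` and `Q y` gives `γ α ‖Q x - Q y‖² ≤ ⟪x - y, Q x - Q y⟫`, and `γ α = β`.
-/

open RealInnerProductSpace
open Filter Topology Set

namespace StrongConvexOn

variable {E : Type*} [NormedAddCommGroup E] [NormedSpace ℝ E] {s : Set E} {m : ℝ} {f : E → ℝ}

theorem add_sq_le_of_isMinOn (hf : StrongConvexOn s m f) {p z : E} (hmin : IsMinOn f s p)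
    (hp : p ∈ s) (hz : z ∈ s) : f p + m / 2 * ‖z - p‖ ^ 2 ≤ f z := by
  have hsegment : ∀ t ∈ Ioo (0 : ℝ) 1, m / 2 * (1 - t) * ‖z - p‖ ^ 2 ≤ f z - f p := by
    rintro t ⟨ht0, ht1⟩
    have hconv := hf.2 hp hz (sub_nonneg.2 ht1.le) ht0.le (sub_add_cancel 1 t)
    have hle : f p ≤ f _ := hmin (hf.1 hp hz (sub_nonneg.2 ht1.le) ht0.le (sub_add_cancel 1 t))
    simp only [smul_eq_mul, norm_sub_rev p z] at hconv
    refine le_of_mul_le_mul_left ?_ ht0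
    nlinarith [hle, hconv]
  have hlim : Tendsto (fun t : ℝ => m / 2 * (1 - t) * ‖z - p‖ ^ 2) (𝓝[>] 0)
      (𝓝 (m / 2 * ‖z - p‖ ^ 2)) := by
    have hcont : Continuous fun t : ℝ => m / 2 * (1 - t) * ‖z - p‖ ^ 2 := by fun_prop
    simpa only [sub_zero, mul_one] using (hcont.tendsto 0).mono_left nhdsWithin_le_nhds
  have := le_of_tendsto hlim (by filter_upwards [Ioo_mem_nhdsGT one_pos] using hsegment)
  linarith

theorem bddBelow_image_of_ball (hf : StrongConvexOn s m f) (hm : 0 < m) {z₀ : E} {δ L : ℝ}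
    (hz₀ : z₀ ∈ s) (hδ : 0 < δ) (hL : ∀ z ∈ s, dist z z₀ < δ → L ≤ f z) : BddBelow (f '' s) := by
  set K := f z₀ - L
  have hK : 0 ≤ K := sub_nonneg.2 (hL z₀ hz₀ (by simpa using hδ))
  refine ⟨f z₀ - 2 * K - 4 * K ^ 2 / (m * δ ^ 2), ?_⟩
  rintro _ ⟨z, hz, rfl⟩
  set r := ‖z - z₀‖
  have hr : 0 ≤ r := norm_nonneg _
  -- `t` puts `(1 - t) • z₀ + t • z` in the ball while keeping `1 - t ≥ 1 / 2`; the bound on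
  -- `f z` is then `f z₀ - 2 K - 2 K r / δ + m r² / 4`, minimized over `r` by completing the square
  set t := δ / (2 * (r + δ))
  have ht0 : 0 < t := by positivity
  have ht1 : t ≤ 1 / 2 := by
    rw [div_le_div_iff₀ (by positivity) two_pos]; linarith
  have htr : t * (2 * (r + δ)) = δ := div_mul_cancel₀ _ (by positivity)
  have hdist : dist ((1 - t) • z₀ + t • z) z₀ < δ := by
    have : (1 - t) • z₀ + t • z - z₀ = t • (z - z₀) := by
      simp only [sub_smul, one_smul, smul_sub]; abel
    rw [dist_eq_norm, this, norm_smul, Real.norm_of_nonneg ht0.le]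
    nlinarith
  have hc := hL _ (hf.1 hz₀ hz (by linarith) ht0.le (sub_add_cancel 1 t)) hdist
  have hconv := hf.2 hz₀ hz (by linarith) ht0.le (sub_add_cancel 1 t)
  simp only [smul_eq_mul, norm_sub_rev z₀ z] at hconv
  have hstep : t * (m / 4 * r ^ 2) - K ≤ t * (f z - f z₀) := by
    nlinarith [mul_nonneg (mul_nonneg ht0.le hm.le) (sq_nonneg r)]
  have hscaled : δ * (m / 4 * r ^ 2) - 2 * (r + δ) * K ≤ δ * (f z - f z₀) := by
    nlinarith
  have hid : δ * (f z - (f z₀ - 2 * K - 4 * K ^ 2 / (m * δ ^ 2))) = δ * (f z - f z₀)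
      - (δ * (m / 4 * r ^ 2) - 2 * (r + δ) * K) + (m * δ * r - 4 * K) ^ 2 / (4 * m * δ) := by
    field_simp; ring
  have hsq : 0 ≤ (m * δ * r - 4 * K) ^ 2 / (4 * m * δ) := by positivity
  have := (mul_nonneg_iff_of_pos_left hδ).1 (by rw [hid]; linarith)
  linarith

theorem cauchySeq_of_tendsto (hf : StrongConvexOn s m f) (hm : 0 < m) {L : ℝ}
    (hL : ∀ z ∈ s, L ≤ f z) {u : ℕ → E} (hu : ∀ n, u n ∈ s)
    (hlim : Tendsto (fun n => f (u n)) atTop (𝓝 L)) : CauchySeq u := by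
  rw [Metric.cauchySeq_iff']
  intro ε hε
  obtain ⟨N, hN⟩ := eventually_atTop.1 <|
    hlim.eventually (eventually_lt_nhds (lt_add_of_pos_right L (by positivity : 0 < m * ε ^ 2 / 8)))
  refine ⟨N, fun n hn => ?_⟩
  have hhalf : (0 : ℝ) ≤ 1 / 2 := by norm_num
  have hmid := hf.2 (hu n) (hu N) hhalf hhalf (add_halves 1)
  have hc := hL _ (hf.1 (hu n) (hu N) hhalf hhalf (add_halves 1))
  simp only [smul_eq_mul] at hmid
  have hsq : ‖u n - u N‖ ^ 2 < ε ^ 2 := by nlinarith [hN n hn, hN N le_rfl]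
  rw [dist_eq_norm]
  exact (pow_lt_pow_iff_left₀ (norm_nonneg _) hε.le two_ne_zero).1 hsq

theorem exists_isMinOn [CompleteSpace E] (hf : StrongConvexOn s m f) (hm : 0 < m)
    (hs : s.Nonempty) (hclosed : ∀ L : ℝ, IsClosed {z | z ∈ s ∧ f z ≤ L}) :
    ∃ q ∈ s, IsMinOn f s q := by
  obtain ⟨z₀, hz₀⟩ := hs
  obtain ⟨δ, hδ, hball⟩ : ∃ δ > 0, Metric.ball z₀ δ ⊆ {z | z ∈ s ∧ f z ≤ f z₀ - 1}ᶜ :=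
    Metric.isOpen_iff.1 (hclosed _).isOpen_compl z₀ (by simp)
  have hbdd : BddBelow (f '' s) := hf.bddBelow_image_of_ball hm hz₀ hδ fun z hz hzd => by
    have := hball hzd
    simp only [mem_compl_iff, mem_ofPred_eq, not_and, not_le] at this
    exact (this hz).le
  obtain ⟨v, -, hv, hvs⟩ := exists_seq_tendsto_sInf (Set.image_nonempty.2 ⟨z₀, hz₀⟩) hbdd
  choose u hus hfu using hvs
  have hL : ∀ z ∈ s, sInf (f '' s) ≤ f z := fun z hz => csInf_le hbdd (mem_image_of_mem f hz)
  obtain ⟨q, hq⟩ := cauchySeq_tendsto_of_complete <|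
    hf.cauchySeq_of_tendsto hm hL hus (by simpa only [hfu] using hv)
  have hsub : ∀ η > 0, q ∈ s ∧ f q ≤ sInf (f '' s) + η := fun η hη =>
    (hclosed _).mem_of_tendsto hq <|
      (hv.eventually (eventually_le_nhds (lt_add_of_pos_right _ hη))).mono fun n hn =>
        ⟨hus n, (hfu n).trans_le hn⟩
  refine ⟨q, (hsub 1 one_pos).1, isMinOn_iff.2 fun z hz => ?_⟩
  exact (le_of_forall_pos_le_add fun η hη => (hsub η hη).2).trans (hL z hz)

end StrongConvexOn

theorem EReal.coe_toReal_add {x : EReal} (hx : x ≠ ⊥) (hx' : x ≠ ⊤) (r : ℝ) :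
    ((x.toReal + r : ℝ) : EReal) = x + r := by
  rw [EReal.coe_add, EReal.coe_toReal hx' hx]

section EReal

variable {E : Type*} {g : E → EReal} {c : E → ℝ}

theorem convexOn_toReal_add_coe [AddCommGroup E] [Module ℝ E] (hbot : ∀ z, g z ≠ ⊥)
    (hconv : ∀ z w : E, ∀ a b : ℝ, 0 ≤ a → 0 ≤ b → a + b = 1 →
      g (a • z + b • w) + (c (a • z + b • w) : EReal)
        ≤ (a : EReal) * (g z + (c z : EReal)) + (b : EReal) * (g w + (c w : EReal))) :
    ConvexOn ℝ {z | g z ≠ ⊤} fun z => (g z).toReal + c z := by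
  have hreal : ∀ z, g z ≠ ⊤ → ∀ w, g w ≠ ⊤ → ∀ a b : ℝ, 0 ≤ a → 0 ≤ b → a + b = 1 →
      g (a • z + b • w) + (c (a • z + b • w) : EReal)
        ≤ ((a * ((g z).toReal + c z) + b * ((g w).toReal + c w) : ℝ) : EReal) := by
    intro z hz w hw a b ha hb hab
    have h := hconv z w a b ha hb hab
    rwa [← EReal.coe_toReal_add (hbot z) hz, ← EReal.coe_toReal_add (hbot w) hw,
      ← EReal.coe_mul, ← EReal.coe_mul, ← EReal.coe_add] at h
  have hdom : Convex ℝ {z | g z ≠ ⊤} := by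
    intro z hz w hw a b ha hb hab htop
    have h := hreal z hz w hw a b ha hb hab
    rw [htop, EReal.top_add_coe, top_le_iff] at h
    exact EReal.coe_ne_top _ h
  refine ⟨hdom, fun z hz w hw a b ha hb hab => ?_⟩
  have h := hreal z hz w hw a b ha hb hab
  rw [← EReal.coe_toReal_add (hbot _) (hdom hz hw ha hb hab)] at h
  exact_mod_cast h

theorem LowerSemicontinuous.isClosed_sublevel_toReal_add [TopologicalSpace E]
    (hg : LowerSemicontinuous g) (hc : Continuous c) (hbot : ∀ z, g z ≠ ⊥) (L : ℝ) :
    IsClosed {z | g z ≠ ⊤ ∧ (g z).toReal + c z ≤ L} := by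
  have hlsc : LowerSemicontinuous fun z => g z + (c z : EReal) :=
    hg.add' (continuous_coe_real_ereal.comp hc).lowerSemicontinuous fun z =>
      EReal.continuousAt_add (Or.inr (EReal.coe_ne_bot _)) (Or.inl (hbot z))
  convert hlsc.isClosed_preimage (L : EReal) using 1
  ext z
  by_cases hz : g z = ⊤
  · simp [hz]
  · rw [mem_preimage, mem_Iic, ← EReal.coe_toReal_add (hbot z) hz, EReal.coe_le_coe_iff]
    simp [hz]

theorem forall_add_coe_le_iff (hbot : ∀ z, g z ≠ ⊥) (hne : ∃ z, g z ≠ ⊤) {q : E} :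
    (∀ z, g q + (c q : EReal) ≤ g z + (c z : EReal)) ↔
      g q ≠ ⊤ ∧ IsMinOn (fun z => (g z).toReal + c z) {z | g z ≠ ⊤} q := by
  constructor
  · intro h
    have hq : g q ≠ ⊤ := by
      obtain ⟨z₀, hz₀⟩ := hne
      intro hq
      have := h z₀
      rw [hq, EReal.top_add_coe, top_le_iff, ← EReal.coe_toReal_add (hbot z₀) hz₀] at this
      exact EReal.coe_ne_top _ this
    refine ⟨hq, isMinOn_iff.2 fun z hz => ?_⟩
    have := h z
    rwa [← EReal.coe_toReal_add (hbot q) hq, ← EReal.coe_toReal_add (hbot z) hz,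
      EReal.coe_le_coe_iff] at this
  · rintro ⟨hq, hmin⟩ z
    by_cases hz : g z = ⊤
    · simp [hz]
    rw [← EReal.coe_toReal_add (hbot q) hq, ← EReal.coe_toReal_add (hbot z) hz,
      EReal.coe_le_coe_iff]
    exact isMinOn_iff.1 hmin z hz

end EReal

section InnerProductSpace

variable {E : Type*} [NormedAddCommGroup E] [InnerProductSpace ℝ E]

theorem ConvexOn.strongConvexOn_add_norm_sub_sq {s : Set E} {φ : E → ℝ} {μ : ℝ}
    (hφ : ConvexOn ℝ s fun z => φ z + μ / 2 * ‖z‖ ^ 2) (γ : ℝ) (y : E) :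
    StrongConvexOn s (1 / γ - μ) fun z => φ z + ‖y - z‖ ^ 2 / (2 * γ) := by
  have haffine : ConvexOn ℝ s fun z => (‖y‖ ^ 2 - 2 * ⟪y, z⟫) / (2 * γ) := by
    refine ⟨hφ.1, fun z _ w _ a b _ _ hab => le_of_eq ?_⟩
    simp only [inner_add_right, inner_smul_right, smul_eq_mul]
    linear_combination (-(‖y‖ ^ 2 / (2 * γ))) * hab
  rw [strongConvexOn_iff_convex]
  refine (hφ.add haffine).congr fun z _ => ?_
  simp only [Pi.add_apply, norm_sub_sq_real y z]
  ring

theorem mul_norm_sub_sq_le_inner_of_add_le {x y p q : E} {a b α γ : ℝ} (hγ : 0 < γ)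
    (hx : a + ‖x - p‖ ^ 2 / (2 * γ) + α / 2 * ‖q - p‖ ^ 2 ≤ b + ‖x - q‖ ^ 2 / (2 * γ))
    (hy : b + ‖y - q‖ ^ 2 / (2 * γ) + α / 2 * ‖p - q‖ ^ 2 ≤ a + ‖y - p‖ ^ 2 / (2 * γ)) :
    γ * α * ‖p - q‖ ^ 2 ≤ ⟪x - y, p - q⟫ := by
  have hexpand : ‖x - q‖ ^ 2 - ‖x - p‖ ^ 2 + ‖y - p‖ ^ 2 - ‖y - q‖ ^ 2 = 2 * ⟪x - y, p - q⟫ := by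
    simp only [norm_sub_sq_real, inner_sub_left, inner_sub_right]
    ring
  rw [norm_sub_rev q p] at hx
  have hsum : α * ‖p - q‖ ^ 2 ≤ 2 * ⟪x - y, p - q⟫ / (2 * γ) := by
    rw [← hexpand, sub_div, add_div, sub_div]
    linarith
  rw [le_div_iff₀ (by positivity)] at hsum
  linarith

end InnerProductSpace

/-- For a proper lsc `μ`-weakly convex function `g`, `γ ∈ (0, 1/μ)` and `β = 1 - γμ`:
for every `y` the function `z ↦ g z + ‖y - z‖²/(2γ)` has a unique minimizer, and the
resulting operator `Q` is `β`-cocoercive. -/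
theorem weakly_convex_prox_cocoercive
    {G : Type*} [NormedAddCommGroup G] [InnerProductSpace ℝ G] [CompleteSpace G]
    (μ γ : ℝ) (hμ : 0 < μ) (hγ : γ ∈ Set.Ioo 0 (1 / μ))
    (β : ℝ) (hβ : β = 1 - γ * μ)
    (g : G → EReal)
    (hproper : ∃ z : G, g z ≠ ⊤) (hnotbot : ∀ z : G, g z ≠ ⊥)
    (hlsc : LowerSemicontinuous g)
    (hwc : ∀ z w : G, ∀ a b : ℝ, 0 ≤ a → 0 ≤ b → a + b = 1 →
      g (a • z + b • w) + ((μ / 2 * ‖a • z + b • w‖ ^ 2 : ℝ) : EReal)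
        ≤ (a : EReal) * (g z + ((μ / 2 * ‖z‖ ^ 2 : ℝ) : EReal))
          + (b : EReal) * (g w + ((μ / 2 * ‖w‖ ^ 2 : ℝ) : EReal))) :
    (∀ y : G, ∃! q : G, ∀ z : G,
      g q + ((‖y - q‖ ^ 2 / (2 * γ) : ℝ) : EReal)
        ≤ g z + ((‖y - z‖ ^ 2 / (2 * γ) : ℝ) : EReal)) ∧
    (∀ Q : G → G, (∀ y z : G,
        g (Q y) + ((‖y - Q y‖ ^ 2 / (2 * γ) : ℝ) : EReal)
          ≤ g z + ((‖y - z‖ ^ 2 / (2 * γ) : ℝ) : EReal)) →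
      ∀ x y : G, ⟪x - y, Q x - Q y⟫ ≥ β * ‖Q x - Q y‖ ^ 2) := by
  obtain ⟨hγ0, hγ1⟩ := hγ
  have hα : 0 < 1 / γ - μ := by
    rw [lt_div_iff₀ hμ] at hγ1
    rw [sub_pos, lt_div_iff₀ hγ0]
    linarith
  have hstrong (y : G) :
      StrongConvexOn {z | g z ≠ ⊤} (1 / γ - μ) fun z => (g z).toReal + ‖y - z‖ ^ 2 / (2 * γ) :=
    (convexOn_toReal_add_coe hnotbot hwc).strongConvexOn_add_norm_sub_sq γ y
  have hprox (y q : G) :=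
    forall_add_coe_le_iff (c := fun z => ‖y - z‖ ^ 2 / (2 * γ)) (q := q) hnotbot hproper
  refine ⟨fun y => ?_, fun Q hQ x y => ?_⟩
  · obtain ⟨q, hq, hmin⟩ := (hstrong y).exists_isMinOn hα hproper
      (hlsc.isClosed_sublevel_toReal_add (by fun_prop) hnotbot)
    refine ⟨q, (hprox y _).2 ⟨hq, hmin⟩, fun p hp => ?_⟩
    obtain ⟨hp', hpmin⟩ := (hprox y _).1 hp
    exact ((hstrong y).strictConvexOn hα).eq_of_isMinOn hpmin hmin hp' hq
  · obtain ⟨hpx, hminx⟩ := (hprox x _).1 (hQ x)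
    obtain ⟨hqy, hminy⟩ := (hprox y _).1 (hQ y)
    have h := mul_norm_sub_sq_le_inner_of_add_le hγ0
      ((hstrong x).add_sq_le_of_isMinOn hminx hpx hqy)
      ((hstrong y).add_sq_le_of_isMinOn hminy hqy hpx)
    rw [hβ, ge_iff_le]
    convert h using 2
    field_simp
end
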